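/- On 𝒬³_α, for every smooth vector field X one has ∇_X ξ = −ε x^{−2}·φ(X); that is, the normality identity ∇_X ξ = −εα·φX + εβ·(X − η(X)ξ) holds with structure functions α = 1/x² and β = 0, and moreover ξ(α) = 0, so 𝒬³_α is a quasi-Sasakian pseudo-metric 3-manifold. -/

import Mathlib

noncomputable section

/-- Points and tangent vectors of ℝ³, written as triples `(x, y, z)`. -/
abbrev R3 : Type := ℝ × ℝ × ℝ

/-- The underlying open set `{(x,y,z) : x > 0}` of `𝒬³_α`. -/
def U3 : Set R3 := {p : R3 | 0 < p.1}

/-- The contact form `η` on `𝒬³_α` : `η_p(v) = −2x·v₂ + v₃`. -/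
def etaQ (p v : R3) : ℝ := -2 * p.1 * v.2.1 + v.2.2

/-- The Reeb vector field `ξ = (0,0,1)`. -/
def xiQ : R3 := (0, 0, 1)

/-- The `(1,1)`-tensor field `φ` : `φ_p(v) = (−v₂, v₁, 2x·v₁)`. -/
def phiQ (p v : R3) : R3 := (-v.2.1, v.1, 2 * p.1 * v.1)

/-- The pseudo-metric `g_p(u,v) = x²(u₁v₁ + u₂v₂) + ε·η_p(u)·η_p(v)` on `𝒬³_α`. -/
def gQ (ε : ℝ) (p u v : R3) : ℝ :=
  p.1 ^ 2 * (u.1 * v.1 + u.2.1 * v.2.1) + ε * etaQ p u * etaQ p v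

lemma gQ_hasFDerivAt (ε : ℝ) (u v p : R3) :
    HasFDerivAt (fun q : R3 => gQ ε q u v)
      ((2 * p.1 * (u.1 * v.1 + u.2.1 * v.2.1) - 2 * ε * u.2.1 * etaQ p v
          - 2 * ε * v.2.1 * etaQ p u) • ContinuousLinearMap.fst ℝ ℝ (ℝ × ℝ)) p := by
  have hF : (fun q : R3 => gQ ε q u v) =
      (fun t : ℝ => t ^ 2 * (u.1 * v.1 + u.2.1 * v.2.1) +
        ε * ((-2 * u.2.1) * t + u.2.2) * ((-2 * v.2.1) * t + v.2.2)) ∘ Prod.fst := by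
    funext q; simp only [Function.comp, gQ, etaQ]; ring
  rw [hF]
  have h1 : HasDerivAt (fun t : ℝ => t ^ 2 * (u.1 * v.1 + u.2.1 * v.2.1))
      ((2 : ℕ) * p.1 ^ 1 * (u.1 * v.1 + u.2.1 * v.2.1)) p.1 :=
    (hasDerivAt_pow 2 p.1).mul_const _
  have h2 : HasDerivAt (fun t : ℝ => (-2 * u.2.1) * t + u.2.2) (-2 * u.2.1) p.1 := by
    simpa using ((hasDerivAt_id p.1).const_mul (-2 * u.2.1)).add_const u.2.2
  have h3 : HasDerivAt (fun t : ℝ => (-2 * v.2.1) * t + v.2.2) (-2 * v.2.1) p.1 := by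
    simpa using ((hasDerivAt_id p.1).const_mul (-2 * v.2.1)).add_const v.2.2
  have hmul : HasDerivAt (fun t : ℝ =>
      ε * ((-2 * u.2.1) * t + u.2.2) * ((-2 * v.2.1) * t + v.2.2))
      ((ε * (-2 * u.2.1)) * ((-2 * v.2.1) * p.1 + v.2.2) +
        (ε * ((-2 * u.2.1) * p.1 + u.2.2)) * (-2 * v.2.1)) p.1 := by
    simpa [mul_assoc, Pi.mul_def] using (h2.const_mul ε).mul h3
  have hsum := h1.add hmul
  have heq : ((2 : ℕ) * p.1 ^ 1 * (u.1 * v.1 + u.2.1 * v.2.1)) +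
      ((ε * (-2 * u.2.1)) * ((-2 * v.2.1) * p.1 + v.2.2) +
        (ε * ((-2 * u.2.1) * p.1 + u.2.2)) * (-2 * v.2.1)) =
      2 * p.1 * (u.1 * v.1 + u.2.1 * v.2.1) - 2 * ε * u.2.1 * etaQ p v
          - 2 * ε * v.2.1 * etaQ p u := by
    simp only [etaQ]; push_cast; ring
  rw [heq] at hsum
  exact hsum.comp_hasFDerivAt p hasFDerivAt_fst

lemma gQ_fderiv_apply (ε : ℝ) (u v p e : R3) :
    fderiv ℝ (fun q : R3 => gQ ε q u v) p e =
      (2 * p.1 * (u.1 * v.1 + u.2.1 * v.2.1) - 2 * ε * u.2.1 * etaQ p v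
          - 2 * ε * v.2.1 * etaQ p u) * e.1 := by
  rw [(gQ_hasFDerivAt ε u v p).fderiv]
  simp [smul_eq_mul]

/-- on `𝒬³_α`, `∇_X ξ = −ε x^{−2}·φ(X)`, i.e. the normality identity
`∇_X ξ = −εα·φX + εβ·(X − η(X)ξ)` holds with `α = 1/x²` and `β = 0`; moreover
`ξ(α) = 0`, so `𝒬³_α` is a quasi-Sasakian pseudo-metric 3-manifold.  Here `∇` is the
Levi-Civita connection of `g`, i.e. the unique torsion-free metric connection
`∇_X Y = DY·X + Γ(X,Y)` on `{x > 0}`. -/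
theorem quasi_sasakian_structure_on_Q (ε : ℝ) (hε : ε = 1 ∨ ε = -1)
    (Γ : R3 → R3 →ₗ[ℝ] R3 →ₗ[ℝ] R3)
    (hΓsmooth : ∀ u v : R3, ContDiffOn ℝ (⊤ : ℕ∞) (fun p => Γ p u v) U3)
    (hΓsymm : ∀ p ∈ U3, ∀ u v : R3, Γ p u v = Γ p v u)
    (hΓmetric : ∀ X Y Z : R3 → R3,
      ContDiffOn ℝ (⊤ : ℕ∞) X U3 → ContDiffOn ℝ (⊤ : ℕ∞) Y U3 → ContDiffOn ℝ (⊤ : ℕ∞) Z U3 →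
      ∀ p ∈ U3, fderiv ℝ (fun q => gQ ε q (Y q) (Z q)) p (X p) =
        gQ ε p (fderiv ℝ Y p (X p) + Γ p (X p) (Y p)) (Z p) +
        gQ ε p (Y p) (fderiv ℝ Z p (X p) + Γ p (X p) (Z p)))
    (X : R3 → R3) (hX : ContDiffOn ℝ (⊤ : ℕ∞) X U3) :
    ∀ p ∈ U3,
      fderiv ℝ (fun _ : R3 => xiQ) p (X p) + Γ p (X p) xiQ =
        (-(ε * (1 / p.1 ^ 2))) • phiQ p (X p) ∧
      fderiv ℝ (fun q : R3 => 1 / q.1 ^ 2) p xiQ = 0 := by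
  intro p hp
  have hx : 0 < p.1 := hp
  have hx0 : p.1 ≠ 0 := hx.ne'
  have hε0 : ε ≠ 0 := by rcases hε with h | h <;> simp [h]
  set w : R3 := X p with hw
  -- Koszul identity for constant vector fields
  have hK : ∀ e u v : R3,
      (2 * p.1 * (u.1 * v.1 + u.2.1 * v.2.1) - 2 * ε * u.2.1 * etaQ p v
          - 2 * ε * v.2.1 * etaQ p u) * e.1 =
        gQ ε p (Γ p e u) v + gQ ε p u (Γ p e v) := by
    intro e u v
    have := hΓmetric (fun _ => e) (fun _ => u) (fun _ => v)
      contDiffOn_const contDiffOn_const contDiffOn_const p hp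
    simpa [gQ_fderiv_apply, fderiv_const] using this
  have key : ∀ v : R3, gQ ε p (Γ p w xiQ) v = ε * (w.2.1 * v.1 - w.1 * v.2.1) := by
    intro v
    have h1 := hK w xiQ v
    have h2 := hK xiQ w v
    have h3 := hK v w xiQ
    rw [hΓsymm p hp xiQ w] at h2
    rw [hΓsymm p hp v w, hΓsymm p hp v xiQ] at h3
    simp only [gQ, etaQ, xiQ] at h1 h2 h3 ⊢
    norm_num at h1 h2 h3 ⊢
    linear_combination (h3 - h1 - h2) / 2
  set d : R3 := Γ p w xiQ with hd
  have k1 := key (1, 0, 0)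
  have k2 := key (0, 1, 0)
  have k3 := key (0, 0, 1)
  simp only [gQ, etaQ] at k1 k2 k3
  norm_num at k1 k2 k3
  have hη : -(2 * p.1 * d.2.1) + d.2.2 = 0 := k3.resolve_left hε0
  have k2' : p.1 ^ 2 * d.2.1 = -(ε * w.1) := by
    rw [hη] at k2; simpa using k2
  constructor
  · have hfc : fderiv ℝ (fun _ : R3 => xiQ) p (X p) = 0 := by simp
    rw [hfc, zero_add]
    show d = (-(ε * (1 / p.1 ^ 2))) • phiQ p w
    have hd1 : d.1 = (-(ε * (1 / p.1 ^ 2))) * (-w.2.1) := by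
      have h2 : p.1 ^ 2 * ((-(ε * (1 / p.1 ^ 2))) * (-w.2.1)) = ε * w.2.1 := by
        field_simp
      exact mul_left_cancel₀ (pow_ne_zero 2 hx0) (k1.trans h2.symm)
    have hd2 : d.2.1 = (-(ε * (1 / p.1 ^ 2))) * w.1 := by
      have h2 : p.1 ^ 2 * ((-(ε * (1 / p.1 ^ 2))) * w.1) = -(ε * w.1) := by
        field_simp
      exact mul_left_cancel₀ (pow_ne_zero 2 hx0) (k2'.trans h2.symm)
    have hd3 : d.2.2 = (-(ε * (1 / p.1 ^ 2))) * (2 * p.1 * w.1) := by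
      have h1 : d.2.2 = 2 * p.1 * d.2.1 := by linarith
      rw [h1, hd2]
      field_simp
    have : ((-(ε * (1 / p.1 ^ 2))) • phiQ p w) =
        ((-(ε * (1 / p.1 ^ 2))) * (-w.2.1), (-(ε * (1 / p.1 ^ 2))) * w.1,
          (-(ε * (1 / p.1 ^ 2))) * (2 * p.1 * w.1)) := by
      simp [phiQ, Prod.smul_def, smul_eq_mul]
    rw [this]
    exact Prod.ext hd1 (Prod.ext hd2 hd3)
  · have hder : HasDerivAt (fun t : ℝ => 1 / t ^ 2)
        (-(((2 : ℕ)) * p.1 ^ 1) / (p.1 ^ 2) ^ 2) p.1 := by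
      simpa [one_div, Pi.inv_def] using (hasDerivAt_pow 2 p.1).inv (pow_ne_zero 2 hx0)
    have hF : HasFDerivAt (fun q : R3 => 1 / q.1 ^ 2)
        ((-(((2 : ℕ)) * p.1 ^ 1) / (p.1 ^ 2) ^ 2) • ContinuousLinearMap.fst ℝ ℝ (ℝ × ℝ)) p :=
      hder.comp_hasFDerivAt p hasFDerivAt_fst
    rw [hF.fderiv]
    simp [xiQ]
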